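/- Let k be a field of characteristic 0, V a finite-dimensional k-vector space with a nondegenerate symmetric bilinear form B, Γ a finite subgroup of SO(V,B), and (a_γ)_{γ∈Γ} a family of skew-symmetric bilinear forms on V. Let 𝐇 be the quotient of the smash product T(V)⋊k[Γ] by the relations v₁v₂ − v₂v₁ = Σ_{γ∈Γ} a_γ(v₁,v₂)·γ for v₁,v₂ ∈ V. Fix a basis {v_i} of V with B-dual basis {v^i} and dual basis {v_i*} ⊂ V*, and in 𝐇⊗𝒲(V⊕V*,ω) set D⁻ = Σ_i v_i⊗v_i*, D⁺ = Σ_i v_i⊗v^i. Then [D⁺,D⁻] = −Ω_V⊗1 − (1/2)Σ_{γ∈Γ} γ⊗τ(γ), where Ω_V = Σ_i v^i v_i ∈ 𝐇 and τ(γ) = −2Σ_{i,j} a_γ(v_i,v_j)·v^i v_j* ∈ 𝒲(V⊕V*,ω). -/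

import Mathlib

noncomputable section

open scoped TensorProduct

/-- The defining relation of the Weyl algebra of a symplectic form `ω`. -/
def weylRel (R : Type*) [CommRing R] (U : Type*) [AddCommGroup U] [Module R U]
    (ω : U →ₗ[R] U →ₗ[R] R) : TensorAlgebra R U → TensorAlgebra R U → Prop :=
  fun a b => ∃ u w : U,
    a = TensorAlgebra.ι R u * TensorAlgebra.ι R w ∧
    b = TensorAlgebra.ι R w * TensorAlgebra.ι R u + algebraMap R _ (ω u w)

/-- The Weyl algebra of `(U, ω)`. -/
abbrev WeylAlg (R : Type*) [CommRing R] (U : Type*) [AddCommGroup U] [Module R U]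
    (ω : U →ₗ[R] U →ₗ[R] R) := RingQuot (weylRel R U ω)

/-- The canonical linear map `U → 𝒲(U,ω)`. -/
def weylι (R : Type*) [CommRing R] (U : Type*) [AddCommGroup U] [Module R U]
    (ω : U →ₗ[R] U →ₗ[R] R) : U →ₗ[R] WeylAlg R U ω :=
  (RingQuot.mkAlgHom R (weylRel R U ω)).toLinearMap ∘ₗ TensorAlgebra.ι R

/-- The canonical symplectic form on `V ⊕ V*`: `ω(V,V) = ω(V*,V*) = 0`, `ω(α,v) = α(v)`. -/
def sympForm (R : Type*) [CommRing R] (V : Type*) [AddCommGroup V] [Module R V] :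
    (V × Module.Dual R V) →ₗ[R] (V × Module.Dual R V) →ₗ[R] R :=
  LinearMap.mk₂ R (fun u w => u.2 w.1 - w.2 u.1)
    (by intro m₁ m₂ n; simp; ring)
    (by intro c m n; simp; ring)
    (by intro m n₁ n₂; simp; ring)
    (by intro c m n; simp; ring)

/-- The image of a vector `v ∈ V` in the Weyl algebra `𝒲(V ⊕ V*, ω)`. -/
def wVec (R : Type*) [CommRing R] (V : Type*) [AddCommGroup V] [Module R V] (v : V) :
    WeylAlg R (V × Module.Dual R V) (sympForm R V) :=
  weylι R (V × Module.Dual R V) (sympForm R V) (v, 0)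

/-- The image of a functional `φ ∈ V*` in the Weyl algebra `𝒲(V ⊕ V*, ω)`. -/
def wDual (R : Type*) [CommRing R] (V : Type*) [AddCommGroup V] [Module R V]
    (φ : Module.Dual R V) : WeylAlg R (V × Module.Dual R V) (sympForm R V) :=
  weylι R (V × Module.Dual R V) (sympForm R V) (0, φ)

section Statement9

variable (𝕜 : Type*) [Field 𝕜] [CharZero 𝕜]
variable (V : Type*) [AddCommGroup V] [Module 𝕜 V]
variable (Γ : Subgroup (V ≃ₗ[𝕜] V)) [Fintype ↥Γ]
variable (a : ↥Γ → V →ₗ[𝕜] V →ₗ[𝕜] 𝕜)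

/-- The generator `v ∈ V` inside `T(V × 𝕜[Γ])`. -/
def tVec (v : V) : TensorAlgebra 𝕜 (V × MonoidAlgebra 𝕜 ↥Γ) :=
  TensorAlgebra.ι 𝕜 (v, 0)

/-- The generator `γ ∈ Γ` inside `T(V × 𝕜[Γ])`. -/
def tGrp (γ : ↥Γ) : TensorAlgebra 𝕜 (V × MonoidAlgebra 𝕜 ↥Γ) :=
  TensorAlgebra.ι 𝕜 (0, MonoidAlgebra.single γ 1)

/-- The relations defining `𝐇` as a quotient of the smash product `T(V) ⋊ 𝕜[Γ]`:
the group-algebra relations, the smash-product relations `γ·v·γ⁻¹ = γ(v)`, and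
Drinfeld's relations `[v,w] = Σ_γ a_γ(v,w) γ`. -/
def drinfeldRel : TensorAlgebra 𝕜 (V × MonoidAlgebra 𝕜 ↥Γ) →
    TensorAlgebra 𝕜 (V × MonoidAlgebra 𝕜 ↥Γ) → Prop := fun x y =>
  (∃ γ δ : ↥Γ, x = tGrp 𝕜 V Γ γ * tGrp 𝕜 V Γ δ ∧ y = tGrp 𝕜 V Γ (γ * δ)) ∨
  (x = tGrp 𝕜 V Γ 1 ∧ y = 1) ∨
  (∃ (γ : ↥Γ) (v : V), x = tGrp 𝕜 V Γ γ * tVec 𝕜 V Γ v ∧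
    y = tVec 𝕜 V Γ ((γ : V ≃ₗ[𝕜] V) v) * tGrp 𝕜 V Γ γ) ∨
  (∃ v w : V, x = tVec 𝕜 V Γ v * tVec 𝕜 V Γ w ∧
    y = tVec 𝕜 V Γ w * tVec 𝕜 V Γ v + ∑ γ : ↥Γ, a γ v w • tGrp 𝕜 V Γ γ)

/-- Drinfeld's degenerate Hecke algebra `𝐇`. -/
abbrev DrinfeldAlg := RingQuot (drinfeldRel 𝕜 V Γ a)

/-- The image of `v ∈ V` in `𝐇`. -/
def hVec (v : V) : DrinfeldAlg 𝕜 V Γ a :=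
  RingQuot.mkAlgHom 𝕜 (drinfeldRel 𝕜 V Γ a) (tVec 𝕜 V Γ v)

/-- The image of `γ ∈ Γ` in `𝐇`. -/
def hGrp (γ : ↥Γ) : DrinfeldAlg 𝕜 V Γ a :=
  RingQuot.mkAlgHom 𝕜 (drinfeldRel 𝕜 V Γ a) (tGrp 𝕜 V Γ γ)

end Statement9

/-! Expanding the commutator of `D⁺ = Σ vᵢ ⊗ vⁱ` and `D⁻ = Σ vᵢ ⊗ vᵢ*` term by term, each product
`(vᵢ ⊗ y)(vⱼ ⊗ z)` is reordered in both tensor factors. Reordering `vᵢvⱼ` in `𝐇` costs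
`Σ_γ a_γ(vᵢ,vⱼ) γ`, which assembles into the `τ`-term; reordering `vⱼ* vⁱ` in the Weyl algebra costs
the scalar `vⱼ*(vⁱ)`, and `Σⱼ vⱼ*(vⁱ) vⱼ = vⁱ` turns these scalars into `Ω_V ⊗ 1`. -/

theorem sum_tmul_commutator {R A W ι : Type*} [CommSemiring R] [Ring A] [Algebra R A]
    [Ring W] [Algebra R W] [Fintype ι] (x : ι → A) (y z : ι → W) (c : ι → ι → A)
    (d : ι → ι → W) (hx : ∀ i j, x i * x j = x j * x i + c i j)
    (hzy : ∀ i j, z j * y i = y i * z j + d i j) :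
    (∑ i, x i ⊗ₜ[R] y i) * (∑ j, x j ⊗ₜ[R] z j) - (∑ j, x j ⊗ₜ[R] z j) * (∑ i, x i ⊗ₜ[R] y i)
      = ∑ i, ∑ j, (c i j ⊗ₜ[R] (y i * z j) - (x j * x i) ⊗ₜ[R] d i j) := by
  rw [Finset.sum_mul_sum, Finset.sum_mul_sum]
  nth_rw 2 [Finset.sum_comm]
  simp only [← Finset.sum_sub_distrib, Algebra.TensorProduct.tmul_mul_tmul]
  refine Finset.sum_congr rfl fun i _ => Finset.sum_congr rfl fun j _ => ?_
  rw [hx, hzy, TensorProduct.add_tmul, TensorProduct.tmul_add]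
  abel

theorem weylι_mul_weylι {R U : Type*} [CommRing R] [AddCommGroup U] [Module R U]
    (ω : U →ₗ[R] U →ₗ[R] R) (u w : U) :
    weylι R U ω u * weylι R U ω w = weylι R U ω w * weylι R U ω u + algebraMap R _ (ω u w) := by
  have h := RingQuot.mkAlgHom_rel R (show weylRel R U ω _ _ from ⟨u, w, rfl, rfl⟩)
  rwa [map_mul, map_add, map_mul, AlgHom.commutes] at h

section DrinfeldRelations

variable {𝕜 : Type*} [Field 𝕜] {V : Type*} [AddCommGroup V] [Module 𝕜 V]
  {Γ : Subgroup (V ≃ₗ[𝕜] V)} [Fintype ↥Γ] {a : ↥Γ → V →ₗ[𝕜] V →ₗ[𝕜] 𝕜}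

theorem wDual_mul_wVec (v : V) (φ : Module.Dual 𝕜 V) :
    wDual 𝕜 V φ * wVec 𝕜 V v = wVec 𝕜 V v * wDual 𝕜 V φ + algebraMap 𝕜 _ (φ v) := by
  rw [wDual, wVec, weylι_mul_weylι]
  simp [sympForm]

theorem hVec_mul_hVec (v w : V) :
    hVec 𝕜 V Γ a v * hVec 𝕜 V Γ a w
      = hVec 𝕜 V Γ a w * hVec 𝕜 V Γ a v + ∑ γ : ↥Γ, a γ v w • hGrp 𝕜 V Γ a γ := by
  have h := RingQuot.mkAlgHom_rel 𝕜
    (show drinfeldRel 𝕜 V Γ a _ _ from Or.inr (Or.inr (Or.inr ⟨v, w, rfl, rfl⟩)))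
  simp only [map_mul, map_add, map_sum, map_smul] at h
  exact h

variable (𝕜 V Γ a) in
def hVecₗ : V →ₗ[𝕜] DrinfeldAlg 𝕜 V Γ a :=
  (RingQuot.mkAlgHom 𝕜 (drinfeldRel 𝕜 V Γ a)).toLinearMap ∘ₗ TensorAlgebra.ι 𝕜 ∘ₗ
    LinearMap.inl 𝕜 V (MonoidAlgebra 𝕜 ↥Γ)

theorem hVecₗ_apply (v : V) : hVecₗ 𝕜 V Γ a v = hVec 𝕜 V Γ a v := rfl

theorem hVec_eq_sum_coord {ι : Type*} [Fintype ι] (b : Module.Basis ι 𝕜 V) (v : V) :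
    hVec 𝕜 V Γ a v = ∑ j, b.coord j v • hVec 𝕜 V Γ a (b j) := by
  conv_lhs => rw [← b.sum_repr v]
  simp only [← hVecₗ_apply, map_sum, map_smul, Module.Basis.coord_apply]

end DrinfeldRelations

section Statement9

variable (𝕜 : Type*) [Field 𝕜] [CharZero 𝕜]
variable (V : Type*) [AddCommGroup V] [Module 𝕜 V]
variable (Γ : Subgroup (V ≃ₗ[𝕜] V)) [Fintype ↥Γ]
variable (a : ↥Γ → V →ₗ[𝕜] V →ₗ[𝕜] 𝕜)

theorem statement9
    (ι : Type) [Fintype ι]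
    (bv : Module.Basis ι 𝕜 V) (v' : ι → V)
    (Dp Dm : DrinfeldAlg 𝕜 V Γ a ⊗[𝕜] WeylAlg 𝕜 (V × Module.Dual 𝕜 V) (sympForm 𝕜 V))
    (hDm : Dm = ∑ i, hVec 𝕜 V Γ a (bv i) ⊗ₜ[𝕜] wDual 𝕜 V (bv.coord i))
    (hDp : Dp = ∑ i, hVec 𝕜 V Γ a (bv i) ⊗ₜ[𝕜] wVec 𝕜 V (v' i))
    (ΩV : DrinfeldAlg 𝕜 V Γ a)
    (hΩV : ΩV = ∑ i, hVec 𝕜 V Γ a (v' i) * hVec 𝕜 V Γ a (bv i))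
    (τ : ↥Γ → WeylAlg 𝕜 (V × Module.Dual 𝕜 V) (sympForm 𝕜 V))
    (hτ : ∀ γ, τ γ = (-2 : 𝕜) • ∑ i, ∑ j,
      a γ (bv i) (bv j) • (wVec 𝕜 V (v' i) * wDual 𝕜 V (bv.coord j))) :
    Dp * Dm - Dm * Dp
      = -(ΩV ⊗ₜ[𝕜] 1) - (1 / 2 : 𝕜) • ∑ γ : ↥Γ, hGrp 𝕜 V Γ a γ ⊗ₜ[𝕜] τ γ := by
  subst hDp hDm hΩV
  rw [sum_tmul_commutator _ _ _ _ _ (fun i j => hVec_mul_hVec (bv i) (bv j))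
    (fun i j => wDual_mul_wVec (v' i) (bv.coord j))]
  have hΩ : (∑ i, hVec 𝕜 V Γ a (v' i) * hVec 𝕜 V Γ a (bv i)) ⊗ₜ[𝕜] (1 : WeylAlg 𝕜 _ _)
      = ∑ i, ∑ j, (hVec 𝕜 V Γ a (bv j) * hVec 𝕜 V Γ a (bv i)) ⊗ₜ[𝕜]
          algebraMap 𝕜 (WeylAlg 𝕜 _ (sympForm 𝕜 V)) (bv.coord j (v' i)) := by
    simp only [hVec_eq_sum_coord bv (v' _), Finset.sum_mul, TensorProduct.sum_tmul,
      Algebra.algebraMap_eq_smul_one, TensorProduct.tmul_smul, smul_mul_assoc,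
      TensorProduct.smul_tmul']
  have hτ' : (1 / 2 : 𝕜) • ∑ γ : ↥Γ, hGrp 𝕜 V Γ a γ ⊗ₜ[𝕜] τ γ
      = -∑ i, ∑ j, (∑ γ : ↥Γ, a γ (bv i) (bv j) • hGrp 𝕜 V Γ a γ) ⊗ₜ[𝕜]
          (wVec 𝕜 V (v' i) * wDual 𝕜 V (bv.coord j)) := by
    simp only [hτ, TensorProduct.tmul_smul, TensorProduct.tmul_sum, TensorProduct.sum_tmul,
      ← TensorProduct.smul_tmul', ← Finset.smul_sum, smul_smul]
    rw [show (1 / 2 : 𝕜) * -2 = -1 by norm_num, Finset.sum_comm]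
    simp_rw [Finset.sum_comm (γ := ↥Γ)]
    exact neg_one_smul 𝕜 (M := DrinfeldAlg 𝕜 V Γ a ⊗[𝕜] WeylAlg 𝕜 _ (sympForm 𝕜 V)) _
  simp only [Finset.sum_sub_distrib, hΩ, hτ']
  abel

end Statement9

end
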